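/- Let c⃗ = ⟨c_α : α < ω₃, α limit⟩ be a □_{ω₂}-sequence. Then there exists a sequence ⟨A_{η,ξ} : η < ω₃, ξ < ω₂⟩ of sets of ordinals satisfying: (1) for all η < ω₃, the sequence ⟨A_{η,ξ} : ξ < ω₂⟩ is ⊆-increasing and continuous (taking unions at limit ξ), each A_{η,ξ} has cardinality less than ω₂, and ⋃_{ξ<ω₂} A_{η,ξ} = η; and (2) whenever β is a limit point of c_α, then for all ξ < ω₂, A_{β,ξ} = A_{α,ξ} ∩ β. -/

import Mathlib

noncomputable section

abbrev Ordi : Type 1 := Ordinal.{0}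

/-- The ordinal `ω₂`. -/
def w2 : Ordi := (Cardinal.aleph 2).ord

/-- The ordinal `ω₃`. -/
def w3 : Ordi := (Cardinal.aleph 3).ord

/-- `C` is a club (closed and unbounded) subset of `κ`. -/
def IsClubIn (C : Set Ordi) (κ : Ordi) : Prop :=
  C ⊆ Set.Iio κ ∧ (∀ α < κ, ∃ β ∈ C, α ≤ β) ∧
    ∀ α, 0 < α → α < κ → (∀ β < α, ∃ γ ∈ C, β < γ ∧ γ < α) → α ∈ C

/-- `β` is a limit point of the set `C`. -/
def IsAcc (β : Ordi) (C : Set Ordi) : Prop :=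
  0 < β ∧ ∀ γ < β, ∃ δ ∈ C, γ < δ ∧ δ < β

/-- The order type of a set of ordinals. -/
def otype (C : Set Ordi) : Ordinal.{1} :=
  Ordinal.type (Subrel ((· < ·) : Ordi → Ordi → Prop) (· ∈ C))

/-!
For limit `η` the club `c η` cuts `η` into blocks: the block of `γ ∈ c η` consists of the `δ ≤ γ`
lying above every point of `c η ∩ γ`. A block has size at most `ℵ₂`, so it is exhausted by the
stages `{δ | e δ < ξ}`, `ξ < ω₂`, of an injection `e` into `ω₂` chosen as a function of the block
alone. `A η ξ` is the union of the `ξ`-th stages of the blocks of the first `ξ` points of `c η`;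
as `otp (c η) ≤ ω₂` every block is reached, and `|A η ξ| ≤ |ξ| · |ξ| < ℵ₂`. If `β` is a limit point
of `c α`, then `c β = c α ∩ β`: the blocks of points below `β`, and their positions, are the same
for `α` and `β`, while the blocks of the other points of `c α` do not meet `β`. Hence
`A β ξ = A α ξ ∩ β`.
-/

open Set Cardinal

section Stage

/-- Junk value `0` when `S` does not inject into `Iio κ`. -/
def stageCode (κ : Ordi) (S : Set Ordi) : S → Ordi :=
  open Classical in
  if h : Nonempty (S ↪ Iio κ) then fun x => h.some x else fun _ => 0

def stage (κ : Ordi) (S : Set Ordi) (ξ : Ordi) : Set Ordi :=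
  {x | ∃ hx : x ∈ S, stageCode κ S ⟨x, hx⟩ < ξ}

variable {κ ξ : Ordi} {S : Set Ordi}

theorem stageCode_injective (hS : #S ≤ #(Iio κ)) : Function.Injective (stageCode κ S) := by
  have h := (Cardinal.le_def _ _).mp hS
  intro x y hxy
  simp only [stageCode, dif_pos h] at hxy
  exact h.some.injective (Subtype.ext hxy)

theorem stageCode_lt (hS : #S ≤ #(Iio κ)) (x : S) : stageCode κ S x < κ := by
  have h := (Cardinal.le_def _ _).mp hS
  simp only [stageCode, dif_pos h]
  exact (h.some x).2

theorem stage_subset : stage κ S ξ ⊆ S := fun _ hx => hx.1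

theorem stage_mono : Monotone (stage κ S) :=
  fun _ _ h _ ⟨hx, hlt⟩ => ⟨hx, hlt.trans_le h⟩

theorem exists_lt_mem_stage_of_isSuccLimit (hξ : Order.IsSuccLimit ξ) {x : Ordi}
    (hx : x ∈ stage κ S ξ) : ∃ ζ < ξ, x ∈ stage κ S ζ :=
  let ⟨hxS, hlt⟩ := hx
  ⟨_, hξ.succ_lt hlt, hxS, Order.lt_succ _⟩

theorem exists_mem_stage (hκ : Order.IsSuccLimit κ) (hS : #S ≤ #(Iio κ)) {x : Ordi}
    (hx : x ∈ S) : ∃ ξ < κ, x ∈ stage κ S ξ :=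
  ⟨_, hκ.succ_lt (stageCode_lt hS ⟨x, hx⟩), hx, Order.lt_succ _⟩

theorem mk_stage_le (hS : #S ≤ #(Iio κ)) (ξ : Ordi) : #(stage κ S ξ) ≤ lift ξ.card := by
  rw [← mk_Iio_ordinal]
  refine mk_le_of_injective (f := fun x => ⟨stageCode κ S ⟨x, x.2.1⟩, x.2.2⟩) fun x y hxy => ?_
  injection stageCode_injective hS (Subtype.ext_iff.mp hxy) with h
  exact Subtype.ext h

end Stage

section Position

variable {C : Set Ordi} {β γ : Ordi}

theorem otype_inter_Iio_lt_otype (hγ : γ ∈ C) : otype (C ∩ Iio γ) < otype C := by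
  refine PrincipalSeg.ordinal_type_lt
    ⟨⟨⟨fun x => ⟨x.1, x.2.1⟩, fun _ _ h => Subtype.ext (Subtype.mk.inj h)⟩, Iff.rfl⟩,
      ⟨γ, hγ⟩, fun x => ⟨?_, fun hx => ⟨⟨x.1, x.2, hx⟩, rfl⟩⟩⟩
  rintro ⟨y, rfl⟩
  exact y.2.2

theorem inter_Iio_inter_Iio_of_le (h : γ ≤ β) : C ∩ Iio β ∩ Iio γ = C ∩ Iio γ := by
  rw [inter_assoc, Iio_inter_Iio, min_eq_right h]

theorem otype_inter_Iio_strictMonoOn : StrictMonoOn (fun γ => otype (C ∩ Iio γ)) C := by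
  intro γ hγ γ' _ hlt
  show otype (C ∩ Iio γ) < otype (C ∩ Iio γ')
  rw [← inter_Iio_inter_Iio_of_le hlt.le]
  exact otype_inter_Iio_lt_otype ⟨hγ, hlt⟩

theorem mk_setOf_otype_inter_Iio_lt_le (ξ : Ordi) :
    #{γ ∈ C | otype (C ∩ Iio γ) < Ordinal.lift.{1} ξ} ≤ lift ξ.card := by
  rw [← mk_Iio_ordinal]
  choose f hf using fun γ : {γ ∈ C | otype (C ∩ Iio γ) < Ordinal.lift.{1} ξ} =>
    Ordinal.lt_lift_iff.mp γ.2.2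
  refine mk_le_of_injective (f := fun γ => ⟨f γ, (hf γ).1⟩) fun γ γ' h => Subtype.ext ?_
  refine otype_inter_Iio_strictMonoOn.injOn γ.2.1 γ'.2.1 ?_
  simpa only [(hf γ).2, (hf γ').2] using congrArg (fun x : Iio ξ => Ordinal.lift.{1} x.1) h

theorem exists_lt_lt_lift_of_isSuccLimit {p : Ordinal.{1}} {ξ : Ordi}
    (hξ : Order.IsSuccLimit ξ) (h : p < Ordinal.lift.{1} ξ) :
    ∃ ζ < ξ, p < Ordinal.lift.{1} ζ := by
  obtain ⟨ζ, hζ, rfl⟩ := Ordinal.lt_lift_iff.mp h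
  exact ⟨_, hξ.succ_lt hζ, Ordinal.lift_lt.mpr (Order.lt_succ ζ)⟩

end Position

section ClubMatrix

def block (C : Set Ordi) (γ : Ordi) : Set Ordi :=
  {δ | δ ≤ γ ∧ C ∩ Iio γ ⊆ Iio δ}

def clubMatrix (κ : Ordi) (C : Set Ordi) (ξ : Ordi) : Set Ordi :=
  ⋃ γ ∈ {γ ∈ C | otype (C ∩ Iio γ) < Ordinal.lift.{1} ξ}, stage κ (block C γ) ξ

variable {κ η β : Ordi} {C : Set Ordi}

theorem mem_clubMatrix {ξ δ : Ordi} : δ ∈ clubMatrix κ C ξ ↔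
    ∃ γ ∈ C, otype (C ∩ Iio γ) < Ordinal.lift.{1} ξ ∧ δ ∈ stage κ (block C γ) ξ := by
  simp only [clubMatrix, mem_iUnion, mem_ofPred_eq, exists_prop, and_assoc]

theorem block_inter_Iio {γ : Ordi} (h : γ ≤ β) : block (C ∩ Iio β) γ = block C γ := by
  simp only [block, inter_Iio_inter_Iio_of_le h]

theorem mem_block_sInf {δ : Ordi} (h : (C ∩ Ici δ).Nonempty) :
    δ ∈ block C (sInf (C ∩ Ici δ)) := by
  refine ⟨(csInf_mem h).2, fun x hx => mem_Iio.mpr <| lt_of_not_ge fun hδx => ?_⟩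
  exact (csInf_le' (show x ∈ C ∩ Ici δ from ⟨hx.1, hδx⟩)).not_gt hx.2

theorem mk_block_le (hC : C ⊆ Iio η) {γ : Ordi} (hγ : γ ∈ C) : #(block C γ) ≤ #(Iio η) :=
  mk_le_mk_of_subset fun _ hδ => hδ.1.trans_lt (hC hγ)

theorem clubMatrix_mono : Monotone (clubMatrix κ C) := by
  intro ξ ξ' h δ hδ
  obtain ⟨γ, hγ, hpos, hδ⟩ := mem_clubMatrix.mp hδ
  exact mem_clubMatrix.mpr ⟨γ, hγ, hpos.trans_le (Ordinal.lift_le.mpr h), stage_mono h hδ⟩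

theorem clubMatrix_eq_iUnion_of_isSuccLimit {ξ : Ordi} (hξ : Order.IsSuccLimit ξ) :
    clubMatrix κ C ξ = ⋃ ζ ∈ Iio ξ, clubMatrix κ C ζ := by
  refine subset_antisymm ?_ (iUnion₂_subset fun ζ hζ => clubMatrix_mono (le_of_lt hζ))
  intro δ hδ
  obtain ⟨γ, hγ, hpos, hδ⟩ := mem_clubMatrix.mp hδ
  obtain ⟨ζ₁, hζ₁, hpos⟩ := exists_lt_lt_lift_of_isSuccLimit hξ hpos
  obtain ⟨ζ₂, hζ₂, hδ⟩ := exists_lt_mem_stage_of_isSuccLimit hξ hδ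
  refine mem_iUnion₂.mpr ⟨max ζ₁ ζ₂, max_lt hζ₁ hζ₂, mem_clubMatrix.mpr ⟨γ, hγ, ?_, ?_⟩⟩
  · exact hpos.trans_le (Ordinal.lift_le.mpr (le_max_left ζ₁ ζ₂))
  · exact stage_mono (le_max_right ζ₁ ζ₂) hδ

theorem mk_clubMatrix_le (hC : C ⊆ Iio η) (hη : #(Iio η) ≤ #(Iio κ)) (ξ : Ordi) :
    #(clubMatrix κ C ξ) ≤ lift ξ.card * lift ξ.card :=
  (mk_biUnion_le _ _).trans <| mul_le_mul' (mk_setOf_otype_inter_Iio_lt_le ξ) <|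
    ciSup_le' fun γ => mk_stage_le ((mk_block_le hC γ.2.1).trans hη) ξ

theorem iUnion_clubMatrix (hκ : Order.IsSuccLimit κ) (hC : C ⊆ Iio η)
    (hcof : ∀ δ < η, ∃ γ ∈ C, δ ≤ γ) (hot : ∀ γ ∈ C, otype (C ∩ Iio γ) < Ordinal.lift.{1} κ)
    (hη : #(Iio η) ≤ #(Iio κ)) :
    ⋃ ξ ∈ Iio κ, clubMatrix κ C ξ = Iio η := by
  refine subset_antisymm (iUnion₂_subset fun ξ _ δ hδ => ?_) fun δ hδ => ?_
  · obtain ⟨γ, hγ, -, hδ⟩ := mem_clubMatrix.mp hδ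
    exact (stage_subset hδ).1.trans_lt (hC hγ)
  · obtain ⟨γ', hγ', hδγ'⟩ := hcof δ hδ
    have hne : (C ∩ Ici δ).Nonempty := ⟨γ', hγ', hδγ'⟩
    set γ := sInf (C ∩ Ici δ)
    have hγ : γ ∈ C := (csInf_mem hne).1
    obtain ⟨ξ₁, hξ₁, hpos⟩ := exists_lt_lt_lift_of_isSuccLimit hκ (hot γ hγ)
    obtain ⟨ξ₂, hξ₂, hδ⟩ :=
      exists_mem_stage hκ ((mk_block_le hC hγ).trans hη) (mem_block_sInf hne)
    refine mem_iUnion₂.mpr ⟨max ξ₁ ξ₂, max_lt hξ₁ hξ₂, mem_clubMatrix.mpr ⟨γ, hγ, ?_, ?_⟩⟩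
    · exact hpos.trans_le (Ordinal.lift_le.mpr (le_max_left ξ₁ ξ₂))
    · exact stage_mono (le_max_right ξ₁ ξ₂) hδ

theorem clubMatrix_inter_Iio (hβ : ∀ δ < β, ∃ x ∈ C, δ < x ∧ x < β) (ξ : Ordi) :
    clubMatrix κ (C ∩ Iio β) ξ = clubMatrix κ C ξ ∩ Iio β := by
  ext δ
  simp only [mem_inter_iff, mem_clubMatrix]
  constructor
  · rintro ⟨γ, ⟨hγ, hγβ⟩, hpos, hδ⟩
    rw [inter_Iio_inter_Iio_of_le hγβ.le] at hpos
    rw [block_inter_Iio hγβ.le] at hδ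
    exact ⟨⟨γ, hγ, hpos, hδ⟩, (stage_subset hδ).1.trans_lt hγβ⟩
  · rintro ⟨⟨γ, hγ, hpos, hδ⟩, hδβ⟩
    have hγβ : γ < β := by
      by_contra! hβγ
      obtain ⟨x, hx, hδx, hxβ⟩ := hβ δ hδβ
      exact ((stage_subset hδ).2 ⟨hx, hxβ.trans_le hβγ⟩).not_gt hδx
    refine ⟨γ, ⟨hγ, hγβ⟩, ?_, ?_⟩
    · rwa [inter_Iio_inter_Iio_of_le hγβ.le]
    · rwa [block_inter_Iio hγβ.le]

end ClubMatrix

theorem isSuccLimit_w2 : Order.IsSuccLimit w2 := isSuccLimit_ord (aleph0_le_aleph 2)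

theorem mk_Iio_le_mk_Iio_w2 {η : Ordi} (hη : η < w3) : #(Iio η) ≤ #(Iio w2) := by
  have h : η.card < Order.succ (ℵ_ 2) := by
    rw [succ_aleph, show (2 : Ordinal) + 1 = 3 by norm_num]
    exact lt_ord.mp hη
  rw [mk_Iio_ordinal, mk_Iio_ordinal, w2, card_ord, lift_le]
  exact Order.lt_succ_iff.mp h

theorem lift_card_mul_lt_aleph_two {ξ : Ordi} (hξ : ξ < w2) :
    lift.{1, 0} ξ.card * lift.{1, 0} ξ.card < lift.{1, 0} (ℵ_ 2) :=
  have h : lift.{1, 0} ξ.card < lift.{1, 0} (ℵ_ 2) := lift_lt.mpr (lt_ord.mp hξ)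
  mul_lt_of_lt (aleph0_le_lift.mpr (aleph0_le_aleph 2)) h h

theorem IsAcc.isSuccLimit {β : Ordi} {C : Set Ordi} (h : IsAcc β C) : Order.IsSuccLimit β := by
  refine Ordinal.isSuccLimit_iff.mpr ⟨h.1.ne', Order.isSuccPrelimit_of_succ_lt fun a ha => ?_⟩
  obtain ⟨δ, -, haδ, hδβ⟩ := h.2 a ha
  exact (Order.succ_le_of_lt haδ).trans_lt hδβ

/-- At a successor `η = x + 1` this is `{x}`, whose only block is `Iio η`; at `0` it is empty. -/
def ladder (c : Ordi → Set Ordi) (η : Ordi) : Set Ordi :=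
  open Classical in
  if Order.IsSuccLimit η then c η else {x | Order.succ x = η}

theorem ladder_of_not_isSuccLimit {c : Ordi → Set Ordi} {η : Ordi} (hη : ¬ Order.IsSuccLimit η) :
    ladder c η ⊆ Iio η ∧ (∀ δ < η, ∃ γ ∈ ladder c η, δ ≤ γ) ∧
      ∀ γ ∈ ladder c η, otype (ladder c η ∩ Iio γ) = 0 := by
  simp only [ladder, if_neg hη]
  refine ⟨fun x hx => hx ▸ Order.lt_succ x, fun δ hδ => ?_, fun γ hγ => ?_⟩
  · obtain rfl | ⟨x, rfl⟩ | hlim := Ordinal.zero_or_succ_or_isSuccLimit η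
    · exact absurd hδ zero_le.not_gt
    · exact ⟨x, rfl, Order.lt_succ_iff.mp hδ⟩
    · exact absurd hlim hη
  · have : IsEmpty ↥({x | Order.succ x = η} ∩ Iio γ) :=
      ⟨fun ⟨x, hx, hxγ⟩ => hxγ.ne (Order.succ_injective (hx.trans hγ.symm))⟩
    exact Ordinal.type_eq_zero_of_empty _

theorem ladder_spec {c : Ordi → Set Ordi}
    (hc_club : ∀ α, α < w3 → Order.IsSuccLimit α → IsClubIn (c α) α)
    (hc_ot : ∀ α, α < w3 → Order.IsSuccLimit α → otype (c α) ≤ Ordinal.lift.{1, 0} w2)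
    {η : Ordi} (hη : η < w3) :
    ladder c η ⊆ Iio η ∧ (∀ δ < η, ∃ γ ∈ ladder c η, δ ≤ γ) ∧
      ∀ γ ∈ ladder c η, otype (ladder c η ∩ Iio γ) < Ordinal.lift.{1, 0} w2 := by
  by_cases hlim : Order.IsSuccLimit η
  · obtain ⟨hsub, hcof, -⟩ := hc_club η hη hlim
    simp only [ladder, if_pos hlim]
    exact ⟨hsub, hcof, fun γ hγ => (otype_inter_Iio_lt_otype hγ).trans_le (hc_ot η hη hlim)⟩
  · obtain ⟨hsub, hcof, hot⟩ := ladder_of_not_isSuccLimit (c := c) hlim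
    refine ⟨hsub, hcof, fun γ hγ => ?_⟩
    rw [hot γ hγ, ← Ordinal.lift_zero.{0, 1}, Ordinal.lift_lt]
    exact isSuccLimit_w2.bot_lt

/-- Given a `□_{ω₂}`-sequence `c⃗ = ⟨c_α : α < ω₃, α limit⟩`, there is a matrix
`⟨A_{η,ξ} : η < ω₃, ξ < ω₂⟩` such that for every `η < ω₃` the sequence
`⟨A_{η,ξ} : ξ < ω₂⟩` is an increasing continuous sequence of sets of size
less than `ω₂` with union `η`, and whenever `β` is a limit point of `c_α`
(for limit `α < ω₃`), `A_{β,ξ} = A_{α,ξ} ∩ β` for all `ξ < ω₂`. -/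
theorem square_matrix (c : Ordi → Set Ordi)
    (hc_club : ∀ α, α < w3 → Order.IsSuccLimit α → IsClubIn (c α) α)
    (hc_ot : ∀ α, α < w3 → Order.IsSuccLimit α → otype (c α) ≤ Ordinal.lift.{1, 0} w2)
    (hc_coh : ∀ α, α < w3 → Order.IsSuccLimit α →
      ∀ β < α, IsAcc β (c α) → c α ∩ Set.Iio β = c β) :
    ∃ A : Ordi → Ordi → Set Ordi,
      (∀ η < w3,
        (∀ ξ < w2, Cardinal.mk ↥(A η ξ) < Cardinal.lift.{1, 0} (Cardinal.aleph 2)) ∧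
        (∀ ξ ξ' : Ordi, ξ ≤ ξ' → ξ' < w2 → A η ξ ⊆ A η ξ') ∧
        (∀ ξ, ξ < w2 → Order.IsSuccLimit ξ → A η ξ = ⋃ ζ ∈ Set.Iio ξ, A η ζ) ∧
        (⋃ ξ ∈ Set.Iio w2, A η ξ) = Set.Iio η) ∧
      (∀ α, α < w3 → Order.IsSuccLimit α →
        ∀ β < α, IsAcc β (c α) → ∀ ξ < w2, A β ξ = A α ξ ∩ Set.Iio β) := by
  refine ⟨fun η => clubMatrix w2 (ladder c η), fun η hη => ?_, ?_⟩
  · obtain ⟨hsub, hcof, hot⟩ := ladder_spec hc_club hc_ot hη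
    have hsmall := mk_Iio_le_mk_Iio_w2 hη
    exact ⟨fun ξ hξ => (mk_clubMatrix_le hsub hsmall ξ).trans_lt (lift_card_mul_lt_aleph_two hξ),
      fun ξ ξ' h _ => clubMatrix_mono h, fun ξ _ hξ => clubMatrix_eq_iUnion_of_isSuccLimit hξ,
      iUnion_clubMatrix isSuccLimit_w2 hsub hcof hot hsmall⟩
  · intro α hα hαlim β hβα hβ ξ _
    simp only [ladder, if_pos hαlim, if_pos hβ.isSuccLimit, ← hc_coh α hα hαlim β hβα hβ]
    exact clubMatrix_inter_Iio hβ.2 ξ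

end
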